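/- arXiv:2309.09680 — 3 statements merged into one kernel-verified Lean document; each statement's English description precedes it below -/
import Mathlib

section
/- Let θ* be a point at which F_p and F_m are Fréchet differentiable and let F̃ be the modified model built from the modifiers Λ := DF_p(θ*) − DF_m(θ*) and ε := F_p(θ*) − F_m(θ*) − Λ θ*. If G : ℝ^{nX} × ℝ^{nθ} → ℝ^{q} is Fréchet differentiable at (F_p(θ*), θ*), then G(F̃(θ*), θ*) = G(F_p(θ*), θ*), the maps θ ↦ G(F̃(θ), θ) and θ ↦ G(F_p(θ), θ) have equal Fréchet derivatives at θ*, and in particular θ* satisfies the modified inequality constraints G(F̃(θ*), θ*) ≤ 0 (componentwise) if and only if it satisfies the plant inequality constraints G(F_p(θ*), θ*) ≤ 0. -/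
/-- If the constraint map `G` is Fréchet differentiable at
`(Fp θs, θs)`, then `G(F̃ θs, θs) = G(Fp θs, θs)`, the maps `θ ↦ G(F̃ θ, θ)` and
`θ ↦ G(Fp θ, θ)` have equal Fréchet derivatives at `θs`, and `θs` satisfies the
modified inequality constraints iff it satisfies the plant inequality
constraints (componentwise). -/
theorem modified_constraints_first_order_match {nθ nX q : ℕ}
    (Fp Fm : (Fin nθ → ℝ) → (Fin nX → ℝ)) (θs : Fin nθ → ℝ)
    (hp : DifferentiableAt ℝ Fp θs) (hm : DifferentiableAt ℝ Fm θs)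
    (Λ : (Fin nθ → ℝ) →L[ℝ] (Fin nX → ℝ))
    (hΛ : Λ = fderiv ℝ Fp θs - fderiv ℝ Fm θs)
    (ε : Fin nX → ℝ) (hε : ε = Fp θs - Fm θs - Λ θs)
    (Ft : (Fin nθ → ℝ) → (Fin nX → ℝ))
    (hFt : ∀ θ, Ft θ = Fm θ + Λ θ + ε)
    (G : (Fin nX → ℝ) × (Fin nθ → ℝ) → (Fin q → ℝ))
    (hG : DifferentiableAt ℝ G (Fp θs, θs)) :
    G (Ft θs, θs) = G (Fp θs, θs) ∧
      fderiv ℝ (fun θ => G (Ft θ, θ)) θs =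
        fderiv ℝ (fun θ => G (Fp θ, θ)) θs ∧
      ((∀ i, G (Ft θs, θs) i ≤ 0) ↔ (∀ i, G (Fp θs, θs) i ≤ 0)) := by
  have hval : Ft θs = Fp θs := by
    rw [hFt θs, hε]
    abel
  -- Ft has the same derivative as Fp at θs
  have hFt' : HasFDerivAt Ft (fderiv ℝ Fp θs) θs := by
    have h1 : HasFDerivAt Fm (fderiv ℝ Fm θs) θs := hm.hasFDerivAt
    have h2 : HasFDerivAt (fun θ => Λ θ) (Λ : (Fin nθ → ℝ) →L[ℝ] (Fin nX → ℝ)) θs :=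
      Λ.hasFDerivAt
    have h3 : HasFDerivAt (fun θ => Fm θ + Λ θ + ε)
        (fderiv ℝ Fm θs + Λ) θs := (h1.add h2).add_const ε
    have : Ft = fun θ => Fm θ + Λ θ + ε := funext hFt
    rw [this]
    convert h3 using 1
    rw [hΛ]
    abel
  have hp' : HasFDerivAt Fp (fderiv ℝ Fp θs) θs := hp.hasFDerivAt
  have hG' : HasFDerivAt G (fderiv ℝ G (Fp θs, θs)) (Fp θs, θs) := hG.hasFDerivAt
  have hpair_t : HasFDerivAt (fun θ => (Ft θ, θ))
      ((fderiv ℝ Fp θs).prod (ContinuousLinearMap.id ℝ _)) θs :=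
    HasFDerivAt.prodMk hFt' (hasFDerivAt_id θs)
  have hpair_p : HasFDerivAt (fun θ => (Fp θ, θ))
      ((fderiv ℝ Fp θs).prod (ContinuousLinearMap.id ℝ _)) θs :=
    HasFDerivAt.prodMk hp' (hasFDerivAt_id θs)
  have hGt : HasFDerivAt (fun θ => G (Ft θ, θ))
      ((fderiv ℝ G (Fp θs, θs)).comp
        ((fderiv ℝ Fp θs).prod (ContinuousLinearMap.id ℝ _))) θs := by
    have hG2 : HasFDerivAt G (fderiv ℝ G (Fp θs, θs)) ((fun θ => (Ft θ, θ)) θs) := by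
      simpa [hval] using hG'
    exact HasFDerivAt.comp θs hG2 hpair_t
  have hGp : HasFDerivAt (fun θ => G (Fp θ, θ))
      ((fderiv ℝ G (Fp θs, θs)).comp
        ((fderiv ℝ Fp θs).prod (ContinuousLinearMap.id ℝ _))) θs := by
    have hG2 : HasFDerivAt G (fderiv ℝ G (Fp θs, θs)) ((fun θ => (Fp θ, θ)) θs) := hG'
    exact HasFDerivAt.comp θs hG2 hpair_p
  refine ⟨by rw [hval], ?_, by rw [hval]⟩
  rw [hGt.fderiv, hGp.fderiv]
end

section
/- Let θ* be a point at which F_p and F_m are Fréchet differentiable and let F̃ be the modified model built from the modifiers Λ := DF_p(θ*) − DF_m(θ*) and ε := F_p(θ*) − F_m(θ*) − Λ θ*. Let Φ : ℝ^{nX} × ℝ^{nθ} → ℝ and G : ℝ^{nX} × ℝ^{nθ} → ℝ^{q} be Fréchet differentiable at (F_p(θ*), θ*), and let M₁ : ℝ^{nX} → ℝ^{nx}, M₂ : ℝ^{nθ} → ℝ^{nx} be continuous linear maps. Then for every pair of multipliers π₁ ∈ ℝ^{q} and π₂ ∈ ℝ^{nx}, the modified Lagrangian θ ↦ Φ(F̃(θ),θ)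 + π₁ · G(F̃(θ),θ) + π₂ · (M₁ F̃(θ) + M₂ θ) and the plant Lagrangian θ ↦ Φ(F_p(θ),θ) + π₁ · G(F_p(θ),θ) + π₂ · (M₁ F_p(θ) + M₂ θ) have equal Fréchet derivatives at θ*. -/
open Finset in
/-- For any multipliers `π₁, π₂`, the Lagrangian of the modified
problem (with trajectory map the modified model `F̃`) and the Lagrangian of the
plant problem (with trajectory map `Fp`) have equal Fréchet derivatives at `θs`. -/
theorem modified_lagrangian_gradient_match {nθ nX nx q : ℕ}
    (Fp Fm : (Fin nθ → ℝ) → (Fin nX → ℝ)) (θs : Fin nθ → ℝ)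
    (hp : DifferentiableAt ℝ Fp θs) (hm : DifferentiableAt ℝ Fm θs)
    (Λ : (Fin nθ → ℝ) →L[ℝ] (Fin nX → ℝ))
    (hΛ : Λ = fderiv ℝ Fp θs - fderiv ℝ Fm θs)
    (ε : Fin nX → ℝ) (hε : ε = Fp θs - Fm θs - Λ θs)
    (Ft : (Fin nθ → ℝ) → (Fin nX → ℝ))
    (hFt : ∀ θ, Ft θ = Fm θ + Λ θ + ε)
    (Φ : (Fin nX → ℝ) × (Fin nθ → ℝ) → ℝ)
    (G : (Fin nX → ℝ) × (Fin nθ → ℝ) → (Fin q → ℝ))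
    (hΦ : DifferentiableAt ℝ Φ (Fp θs, θs))
    (hG : DifferentiableAt ℝ G (Fp θs, θs))
    (M₁ : (Fin nX → ℝ) →L[ℝ] (Fin nx → ℝ))
    (M₂ : (Fin nθ → ℝ) →L[ℝ] (Fin nx → ℝ))
    (π₁ : Fin q → ℝ) (π₂ : Fin nx → ℝ) :
    fderiv ℝ (fun θ => Φ (Ft θ, θ) + (∑ i, π₁ i * G (Ft θ, θ) i) +
        ∑ i, π₂ i * (M₁ (Ft θ) + M₂ θ) i) θs =
      fderiv ℝ (fun θ => Φ (Fp θ, θ) + (∑ i, π₁ i * G (Fp θ, θ) i) +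
        ∑ i, π₂ i * (M₁ (Fp θ) + M₂ θ) i) θs := by
  have hval : Ft θs = Fp θs := by
    rw [hFt, hε]; abel
  have hFt' : HasFDerivAt Ft (fderiv ℝ Fp θs) θs := by
    have h1 : HasFDerivAt (fun θ => Fm θ + Λ θ + ε)
        (fderiv ℝ Fm θs + Λ) θs := by
      simpa using ((hm.hasFDerivAt.add Λ.hasFDerivAt).add_const ε)
    have h2 : (fun θ => Fm θ + Λ θ + ε) = Ft := by
      funext θ; rw [hFt]
    have h3 : fderiv ℝ Fm θs + Λ = fderiv ℝ Fp θs := by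
      rw [hΛ]; abel
    rw [h2, h3] at h1; exact h1
  set L : (Fin nX → ℝ) × (Fin nθ → ℝ) → ℝ :=
    fun p => Φ p + (∑ i, π₁ i * G p i) + ∑ i, π₂ i * (M₁ p.1 + M₂ p.2) i with hLdef
  have hLdiff : DifferentiableAt ℝ L (Fp θs, θs) := by
    apply DifferentiableAt.add
    · apply DifferentiableAt.add hΦ
      exact DifferentiableAt.fun_sum fun i _ =>
        (differentiableAt_const _).mul (differentiableAt_pi.mp hG i)
    · apply DifferentiableAt.fun_sum fun i _ => ?_
      apply (differentiableAt_const _).mul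
      exact differentiableAt_pi.mp
        ((M₁.comp (ContinuousLinearMap.fst ℝ _ _) +
          M₂.comp (ContinuousLinearMap.snd ℝ _ _)).differentiableAt) i
  -- the pair maps
  have hpairT : HasFDerivAt (fun θ => (Ft θ, θ))
      ((fderiv ℝ Fp θs).prod (ContinuousLinearMap.id ℝ _)) θs :=
    hFt'.prodMk (hasFDerivAt_id θs)
  have hpairP : HasFDerivAt (fun θ => (Fp θ, θ))
      ((fderiv ℝ Fp θs).prod (ContinuousLinearMap.id ℝ _)) θs :=
    hp.hasFDerivAt.prodMk (hasFDerivAt_id θs)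
  have hL' := hLdiff.hasFDerivAt
  have hT : HasFDerivAt (fun θ => L (Ft θ, θ))
      ((fderiv ℝ L (Fp θs, θs)).comp
        ((fderiv ℝ Fp θs).prod (ContinuousLinearMap.id ℝ _))) θs := by
    have := (hval ▸ hL' : HasFDerivAt L (fderiv ℝ L (Fp θs, θs)) (Ft θs, θs))
    exact HasFDerivAt.comp (f := fun θ => (Ft θ, θ)) θs this hpairT
  have hP : HasFDerivAt (fun θ => L (Fp θ, θ))
      ((fderiv ℝ L (Fp θs, θs)).comp
        ((fderiv ℝ Fp θs).prod (ContinuousLinearMap.id ℝ _))) θs :=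
    HasFDerivAt.comp (f := fun θ => (Fp θ, θ)) θs hL' hpairP
  rw [hT.fderiv, hP.fderiv]
end

section
/- Let θ* be a point at which F_p and F_m are Fréchet differentiable and let F̃ be the modified model built from the modifiers Λ := DF_p(θ*) − DF_m(θ*) and ε := F_p(θ*) − F_m(θ*) − Λ θ*. Let Φ and G be Fréchet differentiable at (F_p(θ*), θ*) and let M₁, M₂ be continuous linear maps. Then for any multipliers π₁ ∈ ℝ^{q} and π₂ ∈ ℝ^{nx}, the triple (θ*, π₁, π₂) is a KKT point of the modified optimization problem (with trajectory map F̃) if and only if it is a KKT point of the plant optimization problem (with trajectory map F_p). -/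
/-- A KKT point `(θ, π₁, π₂)` of the periodic optimization problem
`min_θ Φ(H θ, θ)` subject to `G(H θ, θ) ≤ 0` (componentwise) and
`M₁ (H θ) + M₂ θ = 0`, for a trajectory map `H`: nonnegative inequality
multipliers, stationarity of the Lagrangian, primal feasibility, and
complementary slackness. -/
def IsKKTPoint {nθ nX nx q : ℕ}
    (Φ : (Fin nX → ℝ) × (Fin nθ → ℝ) → ℝ)
    (G : (Fin nX → ℝ) × (Fin nθ → ℝ) → (Fin q → ℝ))
    (M₁ : (Fin nX → ℝ) →L[ℝ] (Fin nx → ℝ))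
    (M₂ : (Fin nθ → ℝ) →L[ℝ] (Fin nx → ℝ))
    (H : (Fin nθ → ℝ) → (Fin nX → ℝ))
    (θ : Fin nθ → ℝ) (π₁ : Fin q → ℝ) (π₂ : Fin nx → ℝ) : Prop :=
  (∀ i, 0 ≤ π₁ i) ∧
  fderiv ℝ (fun θ' => Φ (H θ', θ') + (∑ i, π₁ i * G (H θ', θ') i) +
      ∑ i, π₂ i * (M₁ (H θ') + M₂ θ') i) θ = 0 ∧
  (∀ i, G (H θ, θ) i ≤ 0) ∧
  M₁ (H θ) + M₂ θ = 0 ∧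
  (∀ i, π₁ i * G (H θ, θ) i = 0)

/-- `(θs, π₁, π₂)` is a KKT point of the modified optimization
problem (trajectory map the modified model `F̃`) iff it is a KKT point of the
plant optimization problem (trajectory map `Fp`). -/
theorem modified_kkt_iff_plant_kkt {nθ nX nx q : ℕ}
    (Fp Fm : (Fin nθ → ℝ) → (Fin nX → ℝ)) (θs : Fin nθ → ℝ)
    (hp : DifferentiableAt ℝ Fp θs) (hm : DifferentiableAt ℝ Fm θs)
    (Λ : (Fin nθ → ℝ) →L[ℝ] (Fin nX → ℝ))
    (hΛ : Λ = fderiv ℝ Fp θs - fderiv ℝ Fm θs)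
    (ε : Fin nX → ℝ) (hε : ε = Fp θs - Fm θs - Λ θs)
    (Ft : (Fin nθ → ℝ) → (Fin nX → ℝ))
    (hFt : ∀ θ, Ft θ = Fm θ + Λ θ + ε)
    (Φ : (Fin nX → ℝ) × (Fin nθ → ℝ) → ℝ)
    (G : (Fin nX → ℝ) × (Fin nθ → ℝ) → (Fin q → ℝ))
    (hΦ : DifferentiableAt ℝ Φ (Fp θs, θs))
    (hG : DifferentiableAt ℝ G (Fp θs, θs))
    (M₁ : (Fin nX → ℝ) →L[ℝ] (Fin nx → ℝ))
    (M₂ : (Fin nθ → ℝ) →L[ℝ] (Fin nx → ℝ))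
    (π₁ : Fin q → ℝ) (π₂ : Fin nx → ℝ) :
    IsKKTPoint Φ G M₁ M₂ Ft θs π₁ π₂ ↔ IsKKTPoint Φ G M₁ M₂ Fp θs π₁ π₂ := by
  -- value agreement at θs
  have hval : Ft θs = Fp θs := by
    rw [hFt, hε]; abel
  -- common derivative
  set Dp := fderiv ℝ Fp θs with hDp
  have hpd : HasFDerivAt Fp Dp θs := hp.hasFDerivAt
  have htd : HasFDerivAt Ft Dp θs := by
    have h1 : HasFDerivAt (fun θ => Fm θ + Λ θ + ε) (fderiv ℝ Fm θs + Λ) θs := by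
      simpa using ((hm.hasFDerivAt.add Λ.hasFDerivAt).add_const ε)
    have h2 : fderiv ℝ Fm θs + Λ = Dp := by rw [hΛ]; abel
    have h3 : (fun θ => Fm θ + Λ θ + ε) = Ft := by funext θ; rw [hFt]
    rw [← h3, ← h2]; exact h1
  -- the Lagrangian as a function of (x, θ)
  set L : (Fin nX → ℝ) × (Fin nθ → ℝ) → ℝ :=
    fun p => Φ p + (∑ i, π₁ i * G p i) + ∑ i, π₂ i * (M₁ p.1 + M₂ p.2) i with hLdef
  have hL : DifferentiableAt ℝ L (Fp θs, θs) := by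
    apply DifferentiableAt.add
    · apply hΦ.add
      apply DifferentiableAt.fun_sum
      intro i _
      have hGi : DifferentiableAt ℝ (fun p => G p i) (Fp θs, θs) := by
        have := (ContinuousLinearMap.proj (R := ℝ) (φ := fun _ : Fin q => ℝ)
          i).differentiableAt.comp (Fp θs, θs) hG
        exact this
      exact (differentiableAt_const _).mul hGi
    · apply DifferentiableAt.fun_sum
      intro i _
      have h1 : DifferentiableAt ℝ
          (fun p : (Fin nX → ℝ) × (Fin nθ → ℝ) => (M₁ p.1 + M₂ p.2) i) (Fp θs, θs) := by
        have := ((ContinuousLinearMap.proj (R := ℝ) (φ := fun _ : Fin nx => ℝ) i).comp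
          ((M₁.comp (ContinuousLinearMap.fst ℝ _ _)) +
            (M₂.comp (ContinuousLinearMap.snd ℝ _ _)))).differentiableAt
            (x := (Fp θs, θs))
        exact this
      exact (differentiableAt_const _).mul h1
  -- derivative of θ' ↦ (H θ', θ') for H with derivative Dp at θs
  have hpair_p : HasFDerivAt (fun θ' => (Fp θ', θ'))
      (Dp.prod (ContinuousLinearMap.id ℝ _)) θs :=
    hpd.prodMk (hasFDerivAt_id θs)
  have hpair_t : HasFDerivAt (fun θ' => (Ft θ', θ'))
      (Dp.prod (ContinuousLinearMap.id ℝ _)) θs :=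
    htd.prodMk (hasFDerivAt_id θs)
  set DL := fderiv ℝ L (Fp θs, θs) with hDL
  have hcomp_p : HasFDerivAt (fun θ' => L (Fp θ', θ'))
      (DL.comp (Dp.prod (ContinuousLinearMap.id ℝ _))) θs := by
    have h := HasFDerivAt.comp (f := fun θ' => (Fp θ', θ')) θs hL.hasFDerivAt hpair_p
    exact h
  have hcomp_t : HasFDerivAt (fun θ' => L (Ft θ', θ'))
      (DL.comp (Dp.prod (ContinuousLinearMap.id ℝ _))) θs := by
    have hL' : HasFDerivAt L DL (Ft θs, θs) := by
      rw [show ((Ft θs, θs) : (Fin nX → ℝ) × (Fin nθ → ℝ)) = (Fp θs, θs) by rw [hval]]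
      exact hL.hasFDerivAt
    have h := HasFDerivAt.comp (f := fun θ' => (Ft θ', θ')) θs hL' hpair_t
    exact h
  have hfd : fderiv ℝ (fun θ' => L (Ft θ', θ')) θs
      = fderiv ℝ (fun θ' => L (Fp θ', θ')) θs := by
    rw [hcomp_t.fderiv, hcomp_p.fderiv]
  unfold IsKKTPoint
  rw [hval]
  have : fderiv ℝ (fun θ' => Φ (Ft θ', θ') + (∑ i, π₁ i * G (Ft θ', θ') i) +
        ∑ i, π₂ i * (M₁ (Ft θ') + M₂ θ') i) θs
      = fderiv ℝ (fun θ' => Φ (Fp θ', θ') + (∑ i, π₁ i * G (Fp θ', θ') i) +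
        ∑ i, π₂ i * (M₁ (Fp θ') + M₂ θ') i) θs := hfd
  rw [this]
end
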